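/- Let $0 < \nu < 1$ and $f : \mathbb{N}_a \to \mathbb{R}$. Then for all $t \in \mathbb{N}_{a+1}$, $\nabla_a^{\nu}\,\nabla_a^{-\nu} f(t) = f(t)$, i.e., the nabla fractional difference of order $\nu$ is a left inverse of the nabla fractional sum of order $\nu$. -/

import Mathlib

open Filter Finset

/-- Generalized rising function `x^{\overline r} = Γ(x+r)/Γ(x)` (with the usual
vanishing convention, since `Real.Gamma` vanishes at nonpositive integers and
division by zero is zero in Lean). -/
noncomputable def rfac (x r : ℝ) : ℝ := Real.Gamma (x + r) / Real.Gamma x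

/-- Backward (nabla) difference. -/
def nbl (f : ℤ → ℝ) (t : ℤ) : ℝ := f t - f (t - 1)

/-- The `ν`-th order nabla fractional sum based at `a`. -/
noncomputable def nsum (ν : ℝ) (a : ℤ) (f : ℤ → ℝ) (t : ℤ) : ℝ :=
  (1 / Real.Gamma ν) * ∑ s ∈ Finset.Icc (a + 1) t, rfac ((t : ℝ) - (s : ℝ) + 1) (ν - 1) * f s

/-- The `ν`-th order nabla fractional difference based at `a`, for `0 < ν < 1`. -/
noncomputable def ndiff (ν : ℝ) (a : ℤ) (f : ℤ → ℝ) (t : ℤ) : ℝ :=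
  nbl (nsum (1 - ν) a f) t

/-!
The fractional sums form a semigroup, `∇^{-μ} ∇^{-ν} = ∇^{-(μ+ν)}`. After swapping the two
summations, the inner sum is a convolution of the coefficients
`Γ(μ + k) / (Γ(μ) k!) = multichoose μ k` of `(1 - x)^{-μ}` and `(1 - x)^{-ν}`, which the
Chu–Vandermonde identity turns into the coefficients of `(1 - x)^{-(μ+ν)}`. For `μ = 1 - ν` all
kernel values `rfac _ 0` equal `1`, so `∇^{-(1-ν)} ∇^{-ν} f` is the partial sum of `f`, whose
backward difference is `f`.
-/

-- `multichoose r n = (-1)^n • choose (-r) n`, so this is Chu–Vandermonde for `choose`.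
theorem Ring.multichoose_add {R : Type*} [CommRing R] [BinomialRing R] (r s : R) (n : ℕ) :
    Ring.multichoose (r + s) n =
      ∑ ij ∈ antidiagonal n, Ring.multichoose r ij.1 * Ring.multichoose s ij.2 := by
  have h (x : R) (k : ℕ) : Ring.multichoose x k = Int.negOnePow k • Ring.choose (-x) k := by
    rw [Ring.choose_neg', smul_smul, ← Int.negOnePow_add, Int.negOnePow_even _ (by simp), one_smul]
  rw [h, neg_add, Ring.add_choose_eq n (Commute.all (-r) (-s)), smul_sum]
  refine sum_congr rfl fun ij hij => ?_
  rw [h, h, smul_mul_smul_comm, ← Int.negOnePow_add, ← Nat.cast_add, mem_antidiagonal.mp hij]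

theorem Real.Gamma_add_nat_eq_mul_ascPochhammer {x : ℝ} (hx : 0 < x) (n : ℕ) :
    Real.Gamma (x + n) = Real.Gamma x * (ascPochhammer ℝ n).eval x := by
  induction n with
  | zero => simp
  | succ n ih =>
    rw [Nat.cast_succ, ← add_assoc, Real.Gamma_add_one (by positivity), ih,
      ascPochhammer_succ_eval]
    ring

theorem Real.Gamma_add_nat_eq_mul_multichoose {x : ℝ} (hx : 0 < x) (n : ℕ) :
    Real.Gamma (x + n) = Real.Gamma x * n.factorial * Ring.multichoose x n := by
  rw [Real.Gamma_add_nat_eq_mul_ascPochhammer hx, ← Polynomial.ascPochhammer_smeval_eq_eval,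
    ← Ring.factorial_nsmul_multichoose_eq_ascPochhammer, nsmul_eq_mul, mul_assoc]

theorem rfac_natCast_add_one {ν : ℝ} (hν : 0 < ν) (k : ℕ) :
    rfac ((k : ℝ) + 1) (ν - 1) = Real.Gamma ν * Ring.multichoose ν k := by
  rw [rfac, show ((k : ℝ) + 1) + (ν - 1) = ν + k by ring, Real.Gamma_add_nat_eq_mul_multichoose hν, Real.Gamma_nat_eq_factorial]
  field_simp

theorem Finset.sum_Icc_add_natCast_eq_sum_antidiagonal {M : Type*} [AddCommMonoid M]
    (r : ℤ) (n : ℕ) (g : ℤ → M) :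
    ∑ s ∈ Icc r (r + n), g s = ∑ ij ∈ antidiagonal n, g (r + ij.2) := by
  symm
  refine sum_nbij' (fun ij => r + ij.2) (fun s => ((r + n - s).toNat, (s - r).toNat))
    ?_ ?_ ?_ ?_ fun _ _ => rfl
  all_goals
    intro x hx
    simp only [mem_Icc, HasAntidiagonal.mem_antidiagonal, Prod.ext_iff] at hx ⊢
    omega

theorem sum_Icc_rfac_mul_rfac {μ ν : ℝ} (hμ : 0 < μ) (hν : 0 < ν) {r u : ℤ} (hru : r ≤ u) :
    ∑ s ∈ Icc r u, rfac ((u : ℝ) - s + 1) (μ - 1) * rfac ((s : ℝ) - r + 1) (ν - 1) =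
      Real.Gamma μ * Real.Gamma ν / Real.Gamma (μ + ν) * rfac ((u : ℝ) - r + 1) (μ + ν - 1) := by
  obtain ⟨n, rfl⟩ := Int.le.dest hru
  have hΓ : Real.Gamma (μ + ν) ≠ 0 := (Real.Gamma_pos_of_pos (by positivity)).ne'
  have hterm : ∀ ij ∈ antidiagonal n,
      rfac (((r + n : ℤ) : ℝ) - ((r + ij.2 : ℤ) : ℝ) + 1) (μ - 1) *
          rfac (((r + ij.2 : ℤ) : ℝ) - r + 1) (ν - 1) =
        Real.Gamma μ * Real.Gamma ν * (Ring.multichoose μ ij.1 * Ring.multichoose ν ij.2) := by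
    intro ij hij
    have hn : ((ij.1 : ℝ) + ij.2) = n := by exact_mod_cast HasAntidiagonal.mem_antidiagonal.mp hij
    rw [show ((r + n : ℤ) : ℝ) - ((r + ij.2 : ℤ) : ℝ) + 1 = ij.1 + 1 by push_cast; linarith,
      show ((r + ij.2 : ℤ) : ℝ) - r + 1 = ij.2 + 1 by push_cast; ring,
      rfac_natCast_add_one hμ, rfac_natCast_add_one hν]
    ring
  rw [sum_Icc_add_natCast_eq_sum_antidiagonal, sum_congr rfl hterm, ← mul_sum,
    ← Ring.multichoose_add, show ((r + n : ℤ) : ℝ) - r + 1 = n + 1 by push_cast; ring,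
    rfac_natCast_add_one (add_pos hμ hν)]
  field_simp

theorem nsum_nsum {μ ν : ℝ} (hμ : 0 < μ) (hν : 0 < ν) (a : ℤ) (f : ℤ → ℝ) (t : ℤ) :
    nsum μ a (nsum ν a f) t = nsum (μ + ν) a f t := by
  have hΓμ : Real.Gamma μ ≠ 0 := (Real.Gamma_pos_of_pos hμ).ne'
  have hΓν : Real.Gamma ν ≠ 0 := (Real.Gamma_pos_of_pos hν).ne'
  have hswap : ∑ s ∈ Icc (a + 1) t, ∑ r ∈ Icc (a + 1) s,
        rfac ((t : ℝ) - s + 1) (μ - 1) * rfac ((s : ℝ) - r + 1) (ν - 1) * f r =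
      ∑ r ∈ Icc (a + 1) t, ∑ s ∈ Icc r t,
        rfac ((t : ℝ) - s + 1) (μ - 1) * rfac ((s : ℝ) - r + 1) (ν - 1) * f r :=
    sum_comm' fun s r => by simp only [mem_Icc]; omega
  calc nsum μ a (nsum ν a f) t
      = (Real.Gamma μ * Real.Gamma ν)⁻¹ * ∑ s ∈ Icc (a + 1) t, ∑ r ∈ Icc (a + 1) s,
          rfac ((t : ℝ) - s + 1) (μ - 1) * rfac ((s : ℝ) - r + 1) (ν - 1) * f r := by
        simp only [nsum, mul_sum]
        refine sum_congr rfl fun s _ => sum_congr rfl fun r _ => ?_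
        ring
    _ = (Real.Gamma μ * Real.Gamma ν)⁻¹ * ∑ r ∈ Icc (a + 1) t,
          Real.Gamma μ * Real.Gamma ν / Real.Gamma (μ + ν) *
            rfac ((t : ℝ) - r + 1) (μ + ν - 1) * f r := by
        rw [hswap]
        refine congrArg _ (sum_congr rfl fun r hr => ?_)
        rw [← sum_mul, sum_Icc_rfac_mul_rfac hμ hν (mem_Icc.mp hr).2]
    _ = nsum (μ + ν) a f t := by
        rw [nsum, mul_sum, mul_sum]
        refine sum_congr rfl fun r _ => ?_
        field_simp

theorem nsum_one (a : ℤ) (f : ℤ → ℝ) (t : ℤ) : nsum 1 a f t = ∑ s ∈ Icc (a + 1) t, f s := by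
  rw [nsum, Real.Gamma_one, div_one, one_mul]
  refine sum_congr rfl fun s hs => ?_
  have hst : (s : ℝ) ≤ t := by exact_mod_cast (mem_Icc.mp hs).2
  have hpos : (0 : ℝ) < t - s + 1 := by linarith
  rw [sub_self, rfac, add_zero, div_self (Real.Gamma_pos_of_pos hpos).ne', one_mul]

theorem nbl_sum_Icc (a : ℤ) (f : ℤ → ℝ) {t : ℤ} (ht : a + 1 ≤ t) :
    nbl (fun t => ∑ s ∈ Icc (a + 1) t, f s) t = f t := by
  rw [nbl, ← insert_Icc_sub_one_right_eq_Icc ht, sum_insert (by simp), add_sub_cancel_right]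

theorem stmt3 (ν : ℝ) (h1 : 0 < ν) (h2 : ν < 1) (a : ℤ) (f : ℤ → ℝ)
    (t : ℤ) (ht : a + 1 ≤ t) :
    ndiff ν a (nsum ν a f) t = f t := by
  have hcomp : nsum (1 - ν) a (nsum ν a f) = fun u => ∑ s ∈ Icc (a + 1) u, f s := by
    ext u
    rw [nsum_nsum (sub_pos.mpr h2) h1, sub_add_cancel, nsum_one]
  rw [ndiff, hcomp, nbl_sum_Icc a f ht]
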